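/- arXiv:1109.2425 — 7 statements merged into one kernel-verified Lean document; each statement's English description precedes it below -/
import Mathlib

section
/- For every source S = (T, ⪯, Obj, I) and non-term query q ∈ L_T, let t_q be a fresh term not in T, T^q = T ∪ {t_q}, ⪯^q = ⪯ ∪ {(d, t_q) | d a disjunct of q}, and I^q extending I with I^q(t_q) = ∅. Then ans(q, S) = ans(t_q, S^q) where S^q = (T^q, ⪯^q, Obj, I^q). -/
/-- `J` is a model of the (simplified) source with taxonomy `rules` and interpretation `I`:
each rule `({u_1,...,u_r}, t)` satisfies `J(u_1) ∩ ... ∩ J(u_r) ⊆ J(t)`, and `I ≤ J`. -/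
def IsModel {T Obj : Type} (rules : Set (Finset T × T)) (I J : T → Set Obj) : Prop :=
  (∀ r ∈ rules, (⋂ u ∈ r.1, J u) ⊆ J r.2) ∧ ∀ u, I u ⊆ J u

/-- `ans(t, S)`: the objects belonging to `J(t)` for every model `J` of the source. -/
def ans {T Obj : Type} (rules : Set (Finset T × T)) (I : T → Set Obj) (t : T) : Set Obj :=
  {o | ∀ J : T → Set Obj, IsModel rules I J → o ∈ J t}

/-- Extension of a conjunctive query (finite set of terms) under interpretation `J`. -/
def extC {T Obj : Type} (J : T → Set Obj) (d : Finset T) : Set Obj :=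
  ⋂ u ∈ d, J u

/-- Extension of a query (finite set of conjunctive disjuncts) under `J`. -/
def extQ {T Obj : Type} (J : T → Set Obj) (q : Finset (Finset T)) : Set Obj :=
  ⋃ d ∈ q, extC J d

/-- Answer of a query `q` in the source: objects in `q`'s extension under every model. -/
def ansQ {T Obj : Type} (rules : Set (Finset T × T)) (I : T → Set Obj)
    (q : Finset (Finset T)) : Set Obj :=
  {o | ∀ J : T → Set Obj, IsModel rules I J → o ∈ extQ J q}

/-!
The models of `S^q` are exactly the models `J` of `S` extended by a value of `t_q` containing
`q^J`: the new rules `(d, t_q)` say precisely `q^J ⊆ J(t_q)`, and `I^q(t_q) = ∅` adds no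
constraint. Hence every model of `S^q` puts `q`'s extension inside `t_q`, and interpreting
`t_q` as `q^J` is a model of `S^q` in which `t_q` means exactly `q`.
-/

section FreshTerm

variable {T Obj : Type}

/-- The taxonomy of `S` read over `T ∪ {t_q}`, with `T` embedded as `some`. -/
def liftRules [DecidableEq T] (rules : Set (Finset T × T)) : Set (Finset (Option T) × Option T) :=
  (fun r : Finset T × T => (r.1.image Option.some, Option.some r.2)) '' rules

/-- The taxonomy `⪯^q`, where the fresh term `t_q` is `none`. -/
def freshRules [DecidableEq T] (rules : Set (Finset T × T)) (q : Finset (Finset T)) :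
    Set (Finset (Option T) × Option T) :=
  liftRules rules ∪
    {p | ∃ d ∈ q, p = (d.image Option.some, (none : Option T))}

theorem extC_image {U : Type} [DecidableEq U] (f : T → U) (J : U → Set Obj) (d : Finset T) :
    extC J (d.image f) = extC (J ∘ f) d := by
  ext x
  simp [extC]

theorem isModel_comp_some [DecidableEq T] {rules : Set (Finset T × T)} {q : Finset (Finset T)}
    {I : T → Set Obj} {J : Option T → Set Obj}
    (hJ : IsModel (freshRules rules q) (fun u => u.elim ∅ I) J) :
    IsModel rules I (J ∘ Option.some) := by
  refine ⟨fun r hr => ?_, fun u => hJ.2 (some u)⟩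
  have hlift : (r.1.image some, some r.2) ∈ freshRules rules q :=
    Set.mem_union_left _ (Set.mem_image_of_mem _ hr)
  exact (extC_image some J r.1).superset.trans (hJ.1 (r.1.image some, some r.2) hlift)

theorem extQ_comp_some_subset [DecidableEq T] {rules : Set (Finset T × T)}
    {q : Finset (Finset T)} {I : T → Set Obj} {J : Option T → Set Obj}
    (hJ : IsModel (freshRules rules q) (fun u => u.elim ∅ I) J) :
    extQ (J ∘ Option.some) q ⊆ J none := by
  refine Set.iUnion₂_subset fun d hd => ?_
  have hfresh : (d.image some, none) ∈ freshRules rules q :=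
    Set.mem_union_right _ ⟨d, hd, rfl⟩
  exact (extC_image some J d).superset.trans (hJ.1 (d.image some, none) hfresh)

theorem isModel_freshRules_elim_extQ [DecidableEq T] {rules : Set (Finset T × T)}
    {q : Finset (Finset T)} {I J : T → Set Obj} (hJ : IsModel rules I J) :
    IsModel (freshRules rules q) (fun u => u.elim ∅ I) (fun u => u.elim (extQ J q) J) := by
  set J' : Option T → Set Obj := fun u => u.elim (extQ J q) J
  refine ⟨?_, ?_⟩
  · rintro _ (⟨r, hr, rfl⟩ | ⟨d, hd, rfl⟩)
    · exact (extC_image some J' r.1).subset.trans (hJ.1 r hr)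
    · exact (extC_image some J' d).subset.trans (Set.subset_biUnion_of_mem (u := extC J) hd)
  · rintro (_ | u)
    · exact Set.empty_subset _
    · exact hJ.2 u

end FreshTerm

theorem ansQ_eq_ans_fresh_term_general {T Obj : Type} [DecidableEq T]
    (rules : Set (Finset T × T)) (I : T → Set Obj) (q : Finset (Finset T)) :
    ansQ rules I q =
      ans (T := Option T)
        (((fun r : Finset T × T => (r.1.image Option.some, Option.some r.2)) '' rules) ∪
          {p : Finset (Option T) × Option T |
            ∃ d ∈ q, p = (d.image Option.some, (none : Option T))})
        (fun u => u.elim (∅ : Set Obj) I) (none : Option T) := by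
  ext o
  constructor
  · intro ho J hJ
    exact extQ_comp_some_subset hJ (ho _ (isModel_comp_some hJ))
  · intro ho J hJ
    exact ho _ (isModel_freshRules_elim_extQ hJ)

/-- for a non-term query `q`, adding a fresh term `t_q` (here `none` in
`Option T`), a rule `(d, t_q)` for each disjunct `d` of `q`, and `I^q(t_q) = ∅`, yields
`ans(q, S) = ans(t_q, S^q)`. -/
theorem ansQ_eq_ans_fresh_term {T Obj : Type} [DecidableEq T] [Finite Obj] [Nonempty Obj]
    (rules : Set (Finset T × T)) (I : T → Set Obj) (q : Finset (Finset T))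
    (hq : q.Nonempty) (hd : ∀ d ∈ q, d.Nonempty)
    (hnonterm : ¬ ∃ u : T, q = {({u} : Finset T)}) :
    ansQ rules I q =
      ans (T := Option T)
        (((fun r : Finset T × T => (r.1.image Option.some, Option.some r.2)) '' rules) ∪
          {p : Finset (Option T) × Option T |
            ∃ d ∈ q, p = (d.image Option.some, (none : Option T))})
        (fun u => u.elim (∅ : Set Obj) I) (none : Option T) :=
  ansQ_eq_ans_fresh_term_general rules I q
end

section
/- For every source S = (T, ⪯, Obj, I), object o ∈ Obj, and term t ∈ T: o ∈ ans(t, S) if and only if the propositional Horn program P_S = C_S ∪ I_S ∪ Q_S is unsatisfiable, where C_S = {t' ← t_1, ..., t_m | (t_1 ∧ ... ∧ t_m, t') ∈ ⪯}, I_S = {u ← | u ∈ ind_S(o)}, and Q_S = {← t}. -/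
/-!
Membership of `o` in a model `J` of the source is a truth assignment `u ↦ o ∈ J u` satisfying
the definite clauses and the facts of `P_S`. Conversely, a truth assignment `v` satisfying
them is the fibre at `o` of the model that puts every other object into every term and `o`
into exactly the terms `v` makes true. So a model with `o ∉ J t` exists iff `P_S` is
satisfiable.
-/

def IsHornModel {T : Type} (rules : Set (Finset T × T)) (facts v : T → Prop) : Prop :=
  (∀ r ∈ rules, (∀ u ∈ r.1, v u) → v r.2) ∧ ∀ u, facts u → v u

section

variable {T Obj : Type} {rules : Set (Finset T × T)} {I J : T → Set Obj}

theorem IsModel.isHornModel_mem (hJ : IsModel rules I J) (o : Obj) :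
    IsHornModel rules (fun u => o ∈ I u) (fun u => o ∈ J u) :=
  ⟨fun r hr hbody => hJ.1 r hr (Set.mem_iInter₂.mpr hbody), fun u hu => hJ.2 u hu⟩

theorem IsHornModel.isModel_extend {o : Obj} {v : T → Prop}
    (hv : IsHornModel rules (fun u => o ∈ I u) v) :
    IsModel rules I (fun u => {x | x = o → v u}) := by
  refine ⟨fun r hr x hx => ?_, fun u x hx => ?_⟩
  · rintro rfl
    exact hv.1 r hr fun u hu => Set.mem_iInter₂.mp hx u hu rfl
  · rintro rfl
    exact hv.2 u hx

end

theorem ans_iff_horn_unsat_general {T Obj : Type}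
    (rules : Set (Finset T × T)) (I : T → Set Obj) (t : T) (o : Obj) :
    o ∈ ans rules I t ↔
      ¬ ∃ v : T → Prop,
        (∀ r ∈ rules, (∀ u ∈ r.1, v u) → v r.2) ∧
        (∀ u : T, o ∈ I u → v u) ∧
        ¬ v t := by
  constructor
  · rintro hans ⟨v, hrules, hfacts, hgoal⟩
    exact hgoal (hans _ (IsHornModel.isModel_extend ⟨hrules, hfacts⟩) rfl)
  · intro hunsat J hJ
    by_contra hot
    obtain ⟨hrules, hfacts⟩ := hJ.isHornModel_mem o
    exact hunsat ⟨_, hrules, hfacts, hot⟩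

/-- `o ∈ ans(t, S)` iff the Horn program `P_S = C_S ∪ I_S ∪ Q_S` is
unsatisfiable, where `C_S` contains a definite clause for each taxonomy rule, `I_S` a fact
`u ←` for each `u ∈ ind_S(o)`, and `Q_S` the goal `← t`. -/
theorem ans_iff_horn_unsat {T Obj : Type} [Finite Obj] [Nonempty Obj]
    (rules : Set (Finset T × T)) (I : T → Set Obj) (t : T) (o : Obj) :
    o ∈ ans rules I t ↔
      ¬ ∃ v : T → Prop,
        (∀ r ∈ rules, (∀ u ∈ r.1, v u) → v r.2) ∧
        (∀ u : T, o ∈ I u → v u) ∧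
        ¬ v t :=
  ans_iff_horn_unsat_general rules I t o
end

section
/- o ∈ ans(t, S) if and only if either o ∈ I(t), or there exists a hyperedge ({u_1, ..., u_r}, t) in the taxonomy B-graph such that o ∈ ans(u_i, S) for all 1 ≤ i ≤ r. -/
/-!
The answers form the least model, i.e. the least fixed point of the one-step consequence
operator `J ↦ I ∪ {conclusions of rules whose premises hold in J}`, whose prefixed points are
exactly the models. Unfolding that fixed point once is the theorem.
-/

section ConsequenceOperator

variable {T Obj : Type} (rules : Set (Finset T × T)) (I : T → Set Obj)

def consequence : (T → Set Obj) →o (T → Set Obj) where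
  toFun J u := I u ∪ {o | ∃ r ∈ rules, r.2 = u ∧ ∀ v ∈ r.1, o ∈ J v}
  monotone' _ _ hJK _ := Set.union_subset_union_right _ fun _ ⟨r, hr, hru, hmem⟩ =>
    ⟨r, hr, hru, fun v hv => hJK v (hmem v hv)⟩

variable {rules I}

theorem isModel_iff_consequence_le {J : T → Set Obj} :
    IsModel rules I J ↔ consequence rules I J ≤ J := by
  constructor
  · rintro ⟨hrules, hI⟩ u o (ho | ⟨r, hr, rfl, hmem⟩)
    · exact hI u ho
    · exact hrules r hr (Set.mem_iInter₂.mpr hmem)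
  · exact fun h => ⟨fun r hr o ho => h r.2 (Or.inr ⟨r, hr, rfl, Set.mem_iInter₂.mp ho⟩),
      fun u o ho => h u (Or.inl ho)⟩

variable (rules I)

theorem ans_eq_lfp_consequence : ans rules I = OrderHom.lfp (consequence rules I) := by
  refine le_antisymm (OrderHom.le_lfp _ fun J hJ t o ho => ho J ?_) fun t o ho J hJ => ?_
  · exact isModel_iff_consequence_le.mpr hJ
  · exact OrderHom.lfp_le _ (isModel_iff_consequence_le.mp hJ) t ho

theorem consequence_ans : consequence rules I (ans rules I) = ans rules I := by
  rw [ans_eq_lfp_consequence]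
  exact (consequence rules I).map_lfp

end ConsequenceOperator

theorem ans_unfold_general {T Obj : Type}
    (rules : Set (Finset T × T)) (I : T → Set Obj) (t : T) (o : Obj) :
    o ∈ ans rules I t ↔
      o ∈ I t ∨ ∃ r ∈ rules, r.2 = t ∧ ∀ u ∈ r.1, o ∈ ans rules I u := by
  conv_lhs => rw [← consequence_ans]
  rfl

/-- `o ∈ ans(t, S)` iff either `o ∈ I(t)`, or there is a hyperedge
`({u_1,...,u_r}, t)` of the taxonomy B-graph with `o ∈ ans(u_i, S)` for all `i`. -/
theorem ans_unfold {T Obj : Type} [Finite Obj] [Nonempty Obj]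
    (rules : Set (Finset T × T)) (I : T → Set Obj) (t : T) (o : Obj) :
    o ∈ ans rules I t ↔
      o ∈ I t ∨ ∃ r ∈ rules, r.2 = t ∧ ∀ u ∈ r.1, o ∈ ans rules I u :=
  ans_unfold_general rules I t o
end

section
/- For all sources S, terms t, and objects o: o ∈ ans(t, S) if and only if t belongs to the closure cl(ind_S(o)) of ind_S(o) under the taxonomy rules, where cl(A) is the least set B ⊇ A such that whenever ({u_1,...,u_r}, t') ∈ ⪯ and {u_1,...,u_r} ⊆ B, then t' ∈ B. -/
/-- Closure of `A ⊆ T` under the taxonomy rules: the least `B ⊇ A` such that whenever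
`({u_1,...,u_r}, t) ∈ ⪯` and `{u_1,...,u_r} ⊆ B`, then `t ∈ B`. -/
def cl {T : Type} (rules : Set (Finset T × T)) (A : Set T) : Set T :=
  ⋂₀ {B : Set T | A ⊆ B ∧ ∀ r ∈ rules, ↑r.1 ⊆ B → r.2 ∈ B}

/-!
For a fixed object `o`, the terms `u` with `o ∈ J u` form a rule-closed set containing
`ind(o)` whenever `J` is a model, so they contain `cl(ind(o))`. Conversely, interpreting each
term `u` by `{o | u ∈ cl(ind(o))}` gives a model, in fact the least one, so every
`o ∈ ans(t)` has `t ∈ cl(ind(o))`.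
-/

section Closure

variable {T : Type} (rules : Set (Finset T × T))

theorem subset_cl (A : Set T) : A ⊆ cl rules A :=
  fun _ ha _ hB => hB.1 ha

variable {rules}

theorem mem_cl_of_mem_rules {A : Set T} {r : Finset T × T} (hr : r ∈ rules)
    (h : ↑r.1 ⊆ cl rules A) : r.2 ∈ cl rules A :=
  fun _ hB => hB.2 r hr (h.trans (Set.sInter_subset_of_mem hB))

theorem cl_subset {A B : Set T} (hAB : A ⊆ B) (hB : ∀ r ∈ rules, ↑r.1 ⊆ B → r.2 ∈ B) :
    cl rules A ⊆ B :=
  Set.sInter_subset_of_mem ⟨hAB, hB⟩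

end Closure

theorem isModel_cl {T Obj : Type} (rules : Set (Finset T × T)) (I : T → Set Obj) :
    IsModel rules I (fun u => {o | u ∈ cl rules {v | o ∈ I v}}) :=
  ⟨fun _ hr _ ho => mem_cl_of_mem_rules hr fun u hu => Set.mem_iInter₂.mp ho u hu,
    fun _ _ ho => subset_cl rules _ ho⟩

theorem IsModel.cl_subset {T Obj : Type} {rules : Set (Finset T × T)} {I J : T → Set Obj}
    (hJ : IsModel rules I J) (o : Obj) :
    cl rules {u | o ∈ I u} ⊆ {u | o ∈ J u} :=
  _root_.cl_subset (fun u hu => hJ.2 u hu) fun r hr h => hJ.1 r hr (Set.mem_iInter₂.mpr h)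

theorem ans_iff_mem_closure_general {T Obj : Type}
    (rules : Set (Finset T × T)) (I : T → Set Obj) (t : T) (o : Obj) :
    o ∈ ans rules I t ↔ t ∈ cl rules {u : T | o ∈ I u} :=
  ⟨fun h => h _ (isModel_cl rules I), fun ht _ hJ => hJ.cl_subset o ht⟩

/-- `o ∈ ans(t, S)` iff `t` belongs to the closure of `ind_S(o)` under the
taxonomy rules. -/
theorem ans_iff_mem_closure {T Obj : Type} [Finite Obj] [Nonempty Obj]
    (rules : Set (Finset T × T)) (I : T → Set Obj) (t : T) (o : Obj) :
    o ∈ ans rules I t ↔ t ∈ cl rules {u : T | o ∈ I u} :=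
  ans_iff_mem_closure_general rules I t o
end

section
/- For every query q = d_1 ∨ ... ∨ d_k with disjuncts d_i, ans(q, S) = ans(d_1, S) ∪ ... ∪ ans(d_k, S) provided the least model exists; more precisely, if J* is the least model of S, then ans(q, S) = J*(q), and hence ans distributes over ∨ (union) at the level of queries. -/
/-- Answer of a conjunctive query `d` in the source. -/
def ansC {T Obj : Type} (rules : Set (Finset T × T)) (I : T → Set Obj)
    (d : Finset T) : Set Obj :=
  {o | ∀ J : T → Set Obj, IsModel rules I J → o ∈ extC J d}

section LeastModel

variable {T Obj : Type} {rules : Set (Finset T × T)} {I : T → Set Obj}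

theorem monotone_extC (d : Finset T) : Monotone fun J : T → Set Obj => extC J d :=
  fun _ _ hJ => Set.biInter_mono subset_rfl fun u _ => hJ u

theorem monotone_extQ (q : Finset (Finset T)) : Monotone fun J : T → Set Obj => extQ J q :=
  fun _ _ hJ => Set.biUnion_mono subset_rfl fun d _ => monotone_extC d hJ

theorem certain_eq_of_isLeast_model {F : (T → Set Obj) → Set Obj} (hF : Monotone F)
    {Jstar : T → Set Obj} (hmodel : IsModel rules I Jstar)
    (hleast : ∀ J, IsModel rules I J → Jstar ≤ J) :
    {o | ∀ J, IsModel rules I J → o ∈ F J} = F Jstar :=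
  Set.Subset.antisymm (fun _ ho => ho Jstar hmodel)
    fun _ ho J hJ => hF (hleast J hJ) ho

end LeastModel

theorem ansQ_eq_least_model_ext_general {T Obj : Type}
    (rules : Set (Finset T × T)) (I : T → Set Obj) (q : Finset (Finset T))
    (Jstar : T → Set Obj) (hmodel : IsModel rules I Jstar)
    (hleast : ∀ J : T → Set Obj, IsModel rules I J → ∀ u, Jstar u ⊆ J u) :
    ansQ rules I q = extQ Jstar q ∧
      ansQ rules I q = ⋃ d ∈ q, ansC rules I d := by
  have hQ : ansQ rules I q = extQ Jstar q :=
    certain_eq_of_isLeast_model (monotone_extQ q) hmodel hleast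
  have hC (d : Finset T) : ansC rules I d = extC Jstar d :=
    certain_eq_of_isLeast_model (monotone_extC d) hmodel hleast
  refine ⟨hQ, ?_⟩
  simp only [hQ, hC, extQ]

/-- if `J*` is the least model of `S`, then `ans(q, S) = J*(q)`, and hence
`ans` distributes over disjunction: `ans(q, S) = ans(d_1,S) ∪ ... ∪ ans(d_k,S)`. -/
theorem ansQ_eq_least_model_ext {T Obj : Type} [Finite Obj] [Nonempty Obj]
    (rules : Set (Finset T × T)) (I : T → Set Obj) (q : Finset (Finset T))
    (hq : q.Nonempty) (hd : ∀ d ∈ q, d.Nonempty)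
    (Jstar : T → Set Obj) (hmodel : IsModel rules I Jstar)
    (hleast : ∀ J : T → Set Obj, IsModel rules I J → ∀ u, Jstar u ⊆ J u) :
    ansQ rules I q = extQ Jstar q ∧
      ansQ rules I q = ⋃ d ∈ q, ansC rules I d :=
  ansQ_eq_least_model_ext_general rules I q Jstar hmodel hleast
end

section
/- In the family of taxonomy B-graphs with hyperedges h_i = ({u_i, v_i}, u_{i+1}) and g_i = ({u_i, v_i}, v_{i+1}) for 1 ≤ i ≤ n−1, together with h_n = ({u_n, v_n}, t), there are exactly 2^{n−1} cycle-free simple paths from u_1 to t, namely one for each choice sequence in {h_i, g_i} for i = 1,...,n−1 followed by h_n. -/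
/-- The hyperedges of the family of taxonomy B-graphs of the paper (1-based indices):
`h_i = ({u_i, v_i}, u_{i+1})` and `g_i = ({u_i, v_i}, v_{i+1})` for `1 ≤ i ≤ n-1`,
together with `h_n = ({u_n, v_n}, t)`. -/
def edges {V : Type} [DecidableEq V] (n : ℕ) (u v : ℕ → V) (t : V) :
    Set (Finset V × V) :=
  {e | (∃ i, 1 ≤ i ∧ i + 1 ≤ n ∧ e = (({u i, v i} : Finset V), u (i + 1))) ∨
       (∃ i, 1 ≤ i ∧ i + 1 ≤ n ∧ e = (({u i, v i} : Finset V), v (i + 1))) ∨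
       e = (({u n, v n} : Finset V), t)}

/-- A cycle-free simple path from `s` to `tgt` in the B-graph with hyperedge set `E`,
given by its (nonempty) list of hyperedges: each hyperedge is in `E`, `s` is in the tail
of the first one, the head of the last one is `tgt`, the head of each hyperedge lies in
the tail of the next, all hyperedges are distinct (simple), and all traversed vertexes
`s, h(E_1), h(E_2), ...` are distinct (cycle-free). -/
def IsCFSimplePath {V : Type} (E : Set (Finset V × V)) (s tgt : V)
    (es : List (Finset V × V)) : Prop :=
  ∃ hne : es ≠ [],
    (∀ e ∈ es, e ∈ E) ∧
    s ∈ (es.head hne).1 ∧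
    (es.getLast hne).2 = tgt ∧
    List.Chain' (fun a b => a.2 ∈ b.1) es ∧
    es.Nodup ∧
    (s :: es.map Prod.snd).Nodup


/-!
Every hyperedge has one of the layers `{u_k, v_k}` as its tail, and these layers are pairwise
disjoint and avoid `t`. So a path that has reached layer `k` must continue with `h_k` or `g_k`,
which lands in layer `k + 1`, until `h_n` reaches `t`, which lies in no tail. A path from `u_1`
to `t` is therefore determined by a choice between `h_i` and `g_i` for each `i < n`; conversely,
such a choice visits every layer once, so it is simple and cycle-free.
-/

namespace IsCFSimplePath

variable {V : Type} {E : Set (Finset V × V)} {s t : V} {e : Finset V × V}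
  {es : List (Finset V × V)}

theorem singleton (he : e ∈ E) (hs : s ∈ e.1) (ht : e.2 = t) (hst : s ≠ t) :
    IsCFSimplePath E s t [e] :=
  ⟨List.cons_ne_nil _ _, by simpa using he, hs, ht, List.isChain_singleton _,
    List.nodup_singleton _, by simpa [ht] using hst⟩

theorem cons (h : IsCFSimplePath E e.2 t es) (he : e ∈ E) (hs : s ∈ e.1)
    (hs' : s ∉ e.2 :: es.map Prod.snd) : IsCFSimplePath E s t (e :: es) := by
  obtain ⟨hne, hE, hhead, hlast, hchain, -, hnodup⟩ := h
  refine ⟨List.cons_ne_nil _ _, ?_, hs, ?_, ?_, List.Nodup.of_map Prod.snd hnodup,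
    List.nodup_cons.2 ⟨hs', hnodup⟩⟩
  · simpa [he] using hE
  · rwa [List.getLast_cons hne]
  · obtain ⟨e', es, rfl⟩ := List.exists_cons_of_ne_nil hne
    exact List.IsChain.cons_cons hhead hchain

end IsCFSimplePath

namespace TaxonomyBGraph

variable {V : Type} [DecidableEq V] {n : ℕ} {u v : ℕ → V} {t : V}

def layer (u v : ℕ → V) (k : ℕ) : Finset V := {u k, v k}

/-- `true` at position `i` chooses `h_i`, `false` chooses `g_i`; the path ends with `h_n`. -/
def choicePath (u v : ℕ → V) (t : V) : ℕ → List Bool → List (Finset V × V)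
  | i, [] => [(layer u v i, t)]
  | i, b :: bs => (layer u v i, cond b (u (i + 1)) (v (i + 1))) :: choicePath u v t (i + 1) bs

@[simp]
theorem mem_layer {x : V} {k : ℕ} : x ∈ layer u v k ↔ x = u k ∨ x = v k := by
  simp [layer]

theorem cond_mem_layer (b : Bool) (k : ℕ) : cond b (u k) (v k) ∈ layer u v k := by
  cases b <;> simp

@[simp]
theorem length_choicePath (i : ℕ) (bs : List Bool) :
    (choicePath u v t i bs).length = bs.length + 1 := by
  induction bs generalizing i <;> simp [choicePath, *]

theorem pairwiseDisjoint_layer (hu : Set.InjOn u (Set.Icc 1 n)) (hv : Set.InjOn v (Set.Icc 1 n))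
    (huv : ∀ i ∈ Set.Icc 1 n, ∀ j ∈ Set.Icc 1 n, u i ≠ v j) :
    (Set.Icc 1 n).PairwiseDisjoint (layer u v) := by
  intro i hi j hj hij
  refine Finset.disjoint_left.2 fun x hx hx' => hij ?_
  rw [mem_layer] at hx hx'
  rcases hx with rfl | rfl <;> rcases hx' with h | h
  · exact hu hi hj h
  · exact absurd h (huv i hi j hj)
  · exact absurd h.symm (huv j hj i hi)
  · exact hv hi hj h

theorem mem_edges_iff {e : Finset V × V} : e ∈ edges n u v t ↔
    (∃ i b, 1 ≤ i ∧ i + 1 ≤ n ∧ e = (layer u v i, cond b (u (i + 1)) (v (i + 1)))) ∨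
      e = (layer u v n, t) := by
  simp only [edges, Set.mem_ofPred_eq, Bool.exists_bool, cond_false, cond_true]
  constructor
  · rintro (⟨i, hi⟩ | ⟨i, hi⟩ | h)
    exacts [.inl ⟨i, .inr hi⟩, .inl ⟨i, .inl hi⟩, .inr h]
  · rintro (⟨i, hi | hi⟩ | h)
    exacts [.inr (.inl ⟨i, hi⟩), .inl ⟨i, hi⟩, .inr (.inr h)]

theorem exists_layer_eq_of_mem_edges (hn : 1 ≤ n) {e : Finset V × V}
    (he : e ∈ edges n u v t) : ∃ k ∈ Set.Icc 1 n, e.1 = layer u v k := by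
  rcases mem_edges_iff.1 he with ⟨i, b, hi, hin, rfl⟩ | rfl
  · exact ⟨i, ⟨hi, by omega⟩, rfl⟩
  · exact ⟨n, ⟨hn, le_rfl⟩, rfl⟩

theorem mem_map_snd_choicePath {x : V} : ∀ {i : ℕ} {bs : List Bool},
    x ∈ (choicePath u v t i bs).map Prod.snd →
      x = t ∨ ∃ j, i < j ∧ j ≤ i + bs.length ∧ x ∈ layer u v j
  | i, [], hx => .inl (by simpa [choicePath] using hx)
  | i, b :: bs, hx => by
    rw [choicePath, List.map_cons, List.mem_cons] at hx
    rcases hx with rfl | hx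
    · exact .inr ⟨i + 1, by omega, by simp, cond_mem_layer b _⟩
    · rcases mem_map_snd_choicePath hx with h | ⟨j, hij, hjn, hj⟩
      · exact .inl h
      · exact .inr ⟨j, by omega, by simp; omega, hj⟩

theorem isCFSimplePath_choicePath (hL : (Set.Icc 1 n).PairwiseDisjoint (layer u v))
    (ht : ∀ k ∈ Set.Icc 1 n, t ∉ layer u v k) : ∀ {i : ℕ} {bs : List Bool} {s : V},
    1 ≤ i → bs.length + i = n → s ∈ layer u v i → s ≠ t → (∀ j ∈ Set.Ioc i n, s ∉ layer u v j) →
      IsCFSimplePath (edges n u v t) s t (choicePath u v t i bs)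
  | i, [], s, _, hlen, hs, hst, _ => by
    obtain rfl : i = n := by simpa using hlen
    exact .singleton (mem_edges_iff.2 (.inr rfl)) hs rfl hst
  | i, b :: bs, s, hi, hlen, hs, hst, hs' => by
    rw [List.length_cons] at hlen
    have hi1 : i + 1 ∈ Set.Icc 1 n := ⟨by omega, by omega⟩
    have hw := cond_mem_layer (u := u) (v := v) b (i + 1)
    refine .cons (isCFSimplePath_choicePath hL ht (by omega) (by omega) hw
        (fun h => ht _ hi1 (h ▸ hw)) fun j hj hwj =>
        hj.1.ne (hL.elim_finset hi1 ⟨by linarith [hj.1], hj.2⟩ _ hw hwj))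
      (mem_edges_iff.2 (.inl ⟨i, b, hi, by omega, rfl⟩)) hs ?_
    rw [List.mem_cons]
    rintro (rfl | hmem)
    · exact hs' (i + 1) ⟨by omega, by omega⟩ hw
    · rcases mem_map_snd_choicePath hmem with h | ⟨j, hij, hjn, hj⟩
      · exact hst h
      · exact hs' j ⟨by omega, by omega⟩ hj

theorem eq_choicePath_of_isChain (hn : 1 ≤ n) (hL : (Set.Icc 1 n).PairwiseDisjoint (layer u v))
    (ht : ∀ k ∈ Set.Icc 1 n, t ∉ layer u v k) :
    ∀ {es : List (Finset V × V)} {e : Finset V × V} {i : ℕ}, i ∈ Set.Icc 1 n →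
      e.1 = layer u v i → (∀ x ∈ e :: es, x ∈ edges n u v t) →
      (e :: es).IsChain (fun a b => a.2 ∈ b.1) → ((e :: es).getLast (List.cons_ne_nil _ _)).2 = t →
      ∃ bs, bs.length + i = n ∧ e :: es = choicePath u v t i bs
  | [], e, i, hi, he, hE, _, hlast => by
    rcases mem_edges_iff.1 (hE e (by simp)) with ⟨j, b, hj, hjn, rfl⟩ | rfl
    · exact absurd (hlast ▸ cond_mem_layer b (j + 1)) (ht _ ⟨by omega, hjn⟩)
    · obtain rfl : n = i := hL.elim_finset ⟨hn, le_rfl⟩ hi (u n) (by simp) (he ▸ by simp)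
      exact ⟨[], by simp, rfl⟩
  | e' :: es, e, i, hi, he, hE, hchain, hlast => by
    rw [List.isChain_cons_cons] at hchain
    obtain ⟨k, hk, he'⟩ := exists_layer_eq_of_mem_edges hn (hE e' (by simp))
    rcases mem_edges_iff.1 (hE e (by simp)) with ⟨j, b, hj, hjn, rfl⟩ | rfl
    · obtain rfl : j = i := hL.elim_finset ⟨hj, by omega⟩ hi (u j) (by simp) (he ▸ by simp)
      obtain rfl : j + 1 = k :=
        hL.elim_finset ⟨by omega, hjn⟩ hk _ (cond_mem_layer b _) (he' ▸ hchain.1)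
      obtain ⟨bs, hlen, hbs⟩ := eq_choicePath_of_isChain hn hL ht hk he'
        (fun x hx => hE x (List.mem_cons_of_mem _ hx)) hchain.2
        (by rwa [List.getLast_cons] at hlast)
      exact ⟨b :: bs, by simp; omega, by rw [hbs]; rfl⟩
    · exact absurd (he' ▸ hchain.1) (ht k hk)

theorem isCFSimplePath_iff_eq_choicePath (hn : 1 ≤ n)
    (hL : (Set.Icc 1 n).PairwiseDisjoint (layer u v)) (ht : ∀ k ∈ Set.Icc 1 n, t ∉ layer u v k)
    {es : List (Finset V × V)} : IsCFSimplePath (edges n u v t) (u 1) t es ↔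
      ∃ bs : List Bool, bs.length = n - 1 ∧ es = choicePath u v t 1 bs := by
  have h1 : 1 ∈ Set.Icc 1 n := ⟨le_rfl, hn⟩
  have hu1 : u 1 ∈ layer u v 1 := by simp
  constructor
  · rintro ⟨hne, hE, hhead, hlast, hchain, -, -⟩
    obtain ⟨e, es, rfl⟩ := List.exists_cons_of_ne_nil hne
    obtain ⟨k, hk, he⟩ := exists_layer_eq_of_mem_edges hn (hE e (by simp))
    obtain rfl : k = 1 := hL.elim_finset hk h1 (u 1) (he ▸ hhead) hu1
    obtain ⟨bs, hlen, hbs⟩ := eq_choicePath_of_isChain hn hL ht hk he hE hchain hlast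
    exact ⟨bs, by omega, hbs⟩
  · rintro ⟨bs, hlen, rfl⟩
    exact isCFSimplePath_choicePath hL ht le_rfl (by omega) hu1 (fun h => ht 1 h1 (h ▸ hu1))
      fun j hj hj' => hj.1.ne (hL.elim_finset h1 (Set.Ioc_subset_Icc_self hj) _ hu1 hj')

theorem eq_of_choicePath_eq (huv : ∀ k ∈ Set.Icc 1 n, u k ≠ v k) :
    ∀ {i : ℕ} {bs cs : List Bool}, 1 ≤ i → bs.length + i = n →
      choicePath u v t i bs = choicePath u v t i cs → bs = cs
  | _, [], [], _, _, _ => rfl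
  | _, [], _ :: _, _, _, h | _, _ :: _, [], _, _, h => by simpa using congrArg List.length h
  | i, b :: bs, c :: cs, hi, hlen, h => by
    rw [List.length_cons] at hlen
    simp only [choicePath, List.cons.injEq, Prod.mk.injEq, true_and] at h
    have hbc : b = c := by
      have := huv (i + 1) ⟨by omega, by omega⟩
      cases b <;> cases c <;> simp_all [eq_comm]
    rw [hbc, eq_of_choicePath_eq huv (by omega) (by omega) h.2]

end TaxonomyBGraph

open TaxonomyBGraph

/-- in the family of B-graphs above, with all `2n + 1` vertexes
`u_1, ..., u_n, v_1, ..., v_n, t` distinct and `n ≥ 1`, there are exactly `2^(n-1)`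
cycle-free simple paths from `u_1` to `t`. -/
theorem count_cycle_free_simple_paths {V : Type} [DecidableEq V]
    (n : ℕ) (hn : 1 ≤ n) (u v : ℕ → V) (t : V)
    (hu : Set.InjOn u (Set.Icc 1 n)) (hv : Set.InjOn v (Set.Icc 1 n))
    (huv : ∀ i ∈ Set.Icc 1 n, ∀ j ∈ Set.Icc 1 n, u i ≠ v j)
    (hut : ∀ i ∈ Set.Icc 1 n, u i ≠ t) (hvt : ∀ i ∈ Set.Icc 1 n, v i ≠ t) :
    {es : List (Finset V × V) | IsCFSimplePath (edges n u v t) (u 1) t es}.ncard =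
      2 ^ (n - 1) := by
  have hL := pairwiseDisjoint_layer hu hv huv
  have ht : ∀ k ∈ Set.Icc 1 n, t ∉ layer u v k := fun k hk h => by
    rcases mem_layer.1 h with h | h
    exacts [hut k hk h.symm, hvt k hk h.symm]
  have hinj :
      Function.Injective fun bs : List.Vector Bool (n - 1) => choicePath u v t 1 bs.toList :=
    fun bs cs h => List.Vector.eq _ _ (eq_of_choicePath_eq (fun k hk => huv k hk k hk) le_rfl
      (by simp; omega) h)
  have hpaths : {es | IsCFSimplePath (edges n u v t) (u 1) t es} =
      Set.range fun bs : List.Vector Bool (n - 1) => choicePath u v t 1 bs.toList := by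
    ext es
    simp only [Set.mem_ofPred_eq, isCFSimplePath_iff_eq_choicePath hn hL ht, Set.mem_range]
    exact ⟨fun ⟨bs, hlen, hes⟩ => ⟨⟨bs, hlen⟩, hes.symm⟩,
      fun ⟨bs, hes⟩ => ⟨bs.toList, bs.toList_length, hes.symm⟩⟩
  rw [hpaths, Set.ncard_range_of_injective hinj, Nat.card_eq_fintype_card, card_vector,
    Fintype.card_bool]
end

section
/- For a network of articulated sources N = {S_1, ..., S_n} with pairwise disjoint terminologies, and a term t belonging to terminology T_{S_i} of a source S_i that has no articulations and such that no other source's taxonomy or articulations mention terms of T_{S_i} in rule heads with tails outside T_{S_i}—i.e., t's closure computation stays within S_i—the network answer equals the local answer: ans(t, S_N) = ans(t, (T_{S_i}, ⪯_{S_i}, Obj, I_{S_i})), provided every rule of ⊑_N whose head lies in T_{S_i} is a rule of ⪯_{S_i}. -/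
/-! A model of `R₀` over the terms `S` extends to a model of the larger taxonomy `R` by
interpreting every term outside `S` as everything: rules of `R` with head outside `S` then
hold trivially, and those with head in `S` are rules of `R₀`, whose bodies stay in `S`. -/

open Set

namespace IsModel

variable {T Obj : Type} {R R₀ : Set (Finset T × T)} {I I₀ J : T → Set Obj}

theorem mono (hJ : IsModel R I J) (hR : R₀ ⊆ R) (hI : ∀ u, I₀ u ⊆ I u) : IsModel R₀ I₀ J :=
  ⟨fun r hr => hJ.1 r (hR hr), fun u => (hI u).trans (hJ.2 u)⟩

theorem piecewise_univ {S : Set T} [DecidablePred (· ∈ S)] (hJ : IsModel R₀ I₀ J)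
    (hbodies : ∀ r ∈ R₀, ↑r.1 ⊆ S) (hheads : ∀ r ∈ R, r.2 ∈ S → r ∈ R₀)
    (hI : ∀ u ∈ S, I u ⊆ I₀ u) : IsModel R I (S.piecewise J fun _ => univ) := by
  refine ⟨fun r hr => ?_, fun u => ?_⟩
  · by_cases hhead : r.2 ∈ S
    · have hr₀ := hheads r hr hhead
      have hbody : (⋂ u ∈ r.1, S.piecewise J (fun _ => univ) u) = ⋂ u ∈ r.1, J u :=
        iInter₂_congr fun u hu => piecewise_eq_of_mem _ _ _ (hbodies r hr₀ hu)
      rw [hbody, piecewise_eq_of_mem _ _ _ hhead]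
      exact hJ.1 r hr₀
    · rw [piecewise_eq_of_notMem _ _ _ hhead]
      exact subset_univ _
  · by_cases hu : u ∈ S
    · rw [piecewise_eq_of_mem _ _ _ hu]
      exact (hI u hu).trans (hJ.2 u)
    · rw [piecewise_eq_of_notMem _ _ _ hu]
      exact subset_univ _

end IsModel

section ans

variable {T Obj : Type} {R R₀ : Set (Finset T × T)} {I I₀ : T → Set Obj}

theorem ans_mono (hR : R₀ ⊆ R) (hI : ∀ u, I₀ u ⊆ I u) (t : T) : ans R₀ I₀ t ⊆ ans R I t :=
  fun _ ho J hJ => ho J (hJ.mono hR hI)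

theorem ans_subset_ans_of_heads_mem {S : Set T} (hbodies : ∀ r ∈ R₀, ↑r.1 ⊆ S)
    (hheads : ∀ r ∈ R, r.2 ∈ S → r ∈ R₀) (hI : ∀ u ∈ S, I u ⊆ I₀ u) {t : T} (ht : t ∈ S) :
    ans R I t ⊆ ans R₀ I₀ t := by
  classical
  intro o ho J hJ
  simpa only [piecewise_eq_of_mem _ _ _ ht] using ho _ (hJ.piecewise_univ hbodies hheads hI)

end ans

theorem network_ans_eq_local_ans_general {T Obj : Type} {ι : Type}
    (Tset : ι → Set T)
    (rules artic : ι → Set (Finset T × T))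
    (Inet Iloc : T → Set Obj) (i₀ : ι) (t : T)
    (ht : t ∈ Tset i₀)
    (hlocal : ∀ r ∈ rules i₀, ↑r.1 ⊆ Tset i₀ ∧ r.2 ∈ Tset i₀)
    (hheads : ∀ r ∈ (⋃ i : ι, rules i ∪ artic i), r.2 ∈ Tset i₀ → r ∈ rules i₀)
    (hIloc : ∀ u ∈ Tset i₀, Iloc u = Inet u)
    (hIloc' : ∀ u : T, u ∉ Tset i₀ → Iloc u = ∅) :
    ans (⋃ i : ι, rules i ∪ artic i) Inet t = ans (rules i₀) Iloc t := by
  have hIloc_le : ∀ u, Iloc u ⊆ Inet u := fun u => by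
    by_cases hu : u ∈ Tset i₀
    · exact (hIloc u hu).le
    · exact (hIloc' u hu).trans_le (empty_subset _)
  refine (ans_subset_ans_of_heads_mem (fun r hr => (hlocal r hr).1) hheads
    (fun u hu => (hIloc u hu).ge) ht).antisymm (ans_mono ?_ hIloc_le t)
  exact subset_iUnion_of_subset i₀ subset_union_left

/-- in a network of articulated sources with pairwise disjoint
terminologies, if a term `t` belongs to the terminology of a source `S_{i₀}` that has no
articulations, the local taxonomy of `S_{i₀}` only involves its own terminology, every
rule of the network taxonomy `⊑_N` whose head lies in `T_{S_{i₀}}` is a rule of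
`⪯_{S_{i₀}}`, and the local interpretation agrees with the network interpretation on
`T_{S_{i₀}}` (and is empty outside), then the network answer equals the local answer. -/
theorem network_ans_eq_local_ans {T Obj : Type} {ι : Type} [Finite Obj] [Nonempty Obj]
    (Tset : ι → Set T)
    (hdisj : ∀ i j : ι, i ≠ j → Disjoint (Tset i) (Tset j))
    (rules artic : ι → Set (Finset T × T))
    (Inet Iloc : T → Set Obj) (i₀ : ι) (t : T)
    (ht : t ∈ Tset i₀)
    (hnoartic : artic i₀ = ∅)
    (hlocal : ∀ r ∈ rules i₀, ↑r.1 ⊆ Tset i₀ ∧ r.2 ∈ Tset i₀)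
    (hheads : ∀ r ∈ (⋃ i : ι, rules i ∪ artic i), r.2 ∈ Tset i₀ → r ∈ rules i₀)
    (hIloc : ∀ u ∈ Tset i₀, Iloc u = Inet u)
    (hIloc' : ∀ u : T, u ∉ Tset i₀ → Iloc u = ∅) :
    ans (⋃ i : ι, rules i ∪ artic i) Inet t = ans (rules i₀) Iloc t :=
  network_ans_eq_local_ans_general Tset rules artic Inet Iloc i₀ t ht hlocal hheads hIloc hIloc'
end
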